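/- arXiv:1707.06268 — 2 statements merged into one kernel-verified Lean document; each statement's English description precedes it below -/
import Mathlib

section
/- With h_r^g defined by the recursion of the previous context (h_r^1 = 1 for r = 0,1,2,3, the three-case recursion involving m_r^g for g+1 in terms of g), for every g ≥ 1 the total sum ∑_{r=0}^{6g-3} h_r^g equals 2g · C(2g, g). -/
/-- The coefficient of `t^r` in `(1 + t^3)^(2g)`, extended by zero to negative `r`. -/
noncomputable def mcoef (g : ℕ) (r : ℤ) : ℤ :=
  if 0 ≤ r then ((1 + Polynomial.X ^ 3 : Polynomial ℤ) ^ (2 * g)).coeff r.toNat else 0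

/-- `Tn n k = C(n,k) + C(n,k-2) + C(n,k-4) + ...` -/
def Tn (n : ℕ) : ℕ → ℤ
  | 0 => 1
  | 1 => (n.choose 1 : ℤ)
  | (k+2) => (n.choose (k+2) : ℤ) + Tn n k

/-- `Tn` extended by zero to negative indices. -/
def Tz (n : ℕ) (k : ℤ) : ℤ := if 0 ≤ k then Tn n k.toNat else 0

/-- Binomial coefficient, zero for negative lower index. -/
def Cz (n : ℕ) (k : ℤ) : ℤ := if 0 ≤ k then (n.choose k.toNat : ℤ) else 0

lemma Tz_neg (n : ℕ) {k : ℤ} (h : k < 0) : Tz n k = 0 := by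
  simp [Tz, not_le.mpr h]

lemma Cz_neg (n : ℕ) {k : ℤ} (h : k < 0) : Cz n k = 0 := by
  simp [Cz, not_le.mpr h]

lemma Tz_step (n : ℕ) (k : ℤ) : Tz n k = Cz n k + Tz n (k - 2) := by
  rcases lt_or_ge k 0 with hk | hk
  · rw [Tz_neg n hk, Cz_neg n hk, Tz_neg n (by omega)]; ring
  · lift k to ℕ using hk
    match k with
    | 0 => simp [Tz, Cz, Tn]
    | 1 =>
      have h1 : ((1 : ℕ) : ℤ) - 2 < 0 := by norm_num
      rw [Tz_neg n h1]
      simp [Tz, Cz, Tn]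
    | (m+2) =>
      have h2 : ((m + 2 : ℕ) : ℤ) - 2 = (m : ℤ) := by push_cast; ring
      rw [h2]
      simp only [Tz, Cz, if_pos (by positivity : (0:ℤ) ≤ (m:ℤ)),
        if_pos (by positivity : (0:ℤ) ≤ ((m+2:ℕ):ℤ)), Int.toNat_natCast]
      rw [Tn]

lemma Cz_vdm (n : ℕ) (k : ℤ) : Cz (n + 2) k = Cz n k + 2 * Cz n (k - 1) + Cz n (k - 2) := by
  rcases lt_or_ge k 0 with hk | hk
  · rw [Cz_neg _ hk, Cz_neg n hk, Cz_neg n (by omega), Cz_neg n (by omega)]; ring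
  · lift k to ℕ using hk
    match k with
    | 0 => norm_num [Cz]
    | 1 => norm_num [Cz, Nat.choose_one_right]
    | (m+2) =>
      have h1 : ((m+2:ℕ):ℤ) - 1 = ((m+1:ℕ):ℤ) := by push_cast; ring
      have h2 : ((m+2:ℕ):ℤ) - 2 = ((m:ℕ):ℤ) := by push_cast; ring
      rw [h1, h2]
      simp only [Cz, if_pos (by positivity : (0:ℤ) ≤ ((m+2:ℕ):ℤ)),
        if_pos (by positivity : (0:ℤ) ≤ ((m+1:ℕ):ℤ)),
        if_pos (by positivity : (0:ℤ) ≤ ((m:ℕ):ℤ)), Int.toNat_natCast]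
      have : (n+2).choose (m+2) = n.choose (m+2) + 2 * n.choose (m+1) + n.choose m := by
        rw [Nat.choose_succ_succ (n+1) (m+1), Nat.choose_succ_succ n (m+1),
          Nat.choose_succ_succ n m]
        ring
      rw [this]; push_cast; ring

lemma Tz_shift (n : ℕ) (k : ℤ) :
    Tz (n + 2) k = Tz n k + 2 * Tz n (k - 1) + Tz n (k - 2) := by
  rcases lt_or_ge k 0 with hk | hk
  · rw [Tz_neg _ hk, Tz_neg n hk, Tz_neg n (by omega), Tz_neg n (by omega)]; ring
  · lift k to ℕ using hk
    induction k using Nat.strong_induction_on with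
    | _ k ih =>
      match k with
      | 0 => norm_num [Tz, Tn]
      | 1 =>
        norm_num [Tz, Tn, Nat.choose_one_right]
      | (m+2) =>
        have e2 : ((m+2:ℕ):ℤ) - 2 = ((m:ℕ):ℤ) := by push_cast; ring
        have e1 : ((m+2:ℕ):ℤ) - 1 = ((m+1:ℕ):ℤ) := by push_cast; ring
        have hm := ih m (by omega)
        have s0 := Tz_step (n+2) ((m+2:ℕ):ℤ)
        have s1 := Tz_step n ((m+2:ℕ):ℤ)
        have s2 := Tz_step n ((m+1:ℕ):ℤ)
        have s3 := Tz_step n ((m:ℕ):ℤ)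
        have v := Cz_vdm n ((m+2:ℕ):ℤ)
        rw [e2] at s0 v ⊢
        rw [e1] at v ⊢
        rw [e2] at s1
        have e3 : ((m+1:ℕ):ℤ) - 2 = ((m:ℕ):ℤ) - 1 := by push_cast; ring
        rw [e3] at s2
        linarith
/-- The "base" part of the closed form: `Bz n (3k) = Tz n k`, `Bz n (3k+1) = Tz n (k-1)`,
`Bz n (3k+2) = Tz n k`. -/
def Bz (n : ℕ) (r : ℤ) : ℤ :=
  if r % 3 = 1 then Tz n (r / 3 - 1) else Tz n (r / 3)

/-- Closed form for `h g` on the left half `r ≤ 3g - 3`. -/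
def Lf (g : ℕ) (r : ℤ) : ℤ := Bz (2 * g) r + Tz (2 * g) (r - 2 * g + 1)

/-- Closed form for `h g r` everywhere. -/
def Hc (g : ℕ) (r : ℤ) : ℤ := Lf g (min r (6 * g - 3 - r))

lemma Bz3a (n : ℕ) (k : ℤ) : Bz n (3 * k) = Tz n k := by
  have h1 : (3 * k) % 3 = 0 := by omega
  have h2 : (3 * k) / 3 = k := by omega
  rw [Bz, h1, h2]; norm_num

lemma Bz3b (n : ℕ) (k : ℤ) : Bz n (3 * k + 1) = Tz n (k - 1) := by
  have h1 : (3 * k + 1) % 3 = 1 := by omega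
  have h2 : (3 * k + 1) / 3 = k := by omega
  rw [Bz, h1, h2]; norm_num

lemma Bz3c (n : ℕ) (k : ℤ) : Bz n (3 * k + 2) = Tz n k := by
  have h1 : (3 * k + 2) % 3 = 2 := by omega
  have h2 : (3 * k + 2) / 3 = k := by omega
  rw [Bz, h1, h2]; norm_num

lemma Lf_neg (g : ℕ) (hg : 1 ≤ g) {r : ℤ} (hr : r < 0) : Lf g r = 0 := by
  have hg' : (1 : ℤ) ≤ (g : ℤ) := by exact_mod_cast hg
  have h2 : Tz (2 * g) (r - 2 * g + 1) = 0 := Tz_neg _ (by omega)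
  have h3 : Bz (2 * g) r = 0 := by
    rcases (by omega : r % 3 = 0 ∨ r % 3 = 1 ∨ r % 3 = 2) with h | h | h
    · obtain ⟨k, rfl⟩ : ∃ k, r = 3 * k := ⟨r / 3, by omega⟩
      rw [Bz3a]; exact Tz_neg _ (by omega)
    · obtain ⟨k, rfl⟩ : ∃ k, r = 3 * k + 1 := ⟨r / 3, by omega⟩
      rw [Bz3b]; exact Tz_neg _ (by omega)
    · obtain ⟨k, rfl⟩ : ∃ k, r = 3 * k + 2 := ⟨r / 3, by omega⟩
      rw [Bz3c]; exact Tz_neg _ (by omega)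
  rw [Lf, h2, h3]; ring

lemma poly_expand (n : ℕ) :
    (1 + Polynomial.X ^ 3 : Polynomial ℤ) ^ n =
      ∑ j ∈ Finset.range (n + 1), Polynomial.C ((n.choose j : ℤ)) * Polynomial.X ^ (3 * j) := by
  rw [add_comm, add_pow]
  refine Finset.sum_congr rfl fun j hj => ?_
  rw [one_pow, mul_one, ← pow_mul, Polynomial.C_eq_natCast]
  ring

lemma mcoef_mul3 (g : ℕ) (k : ℤ) : mcoef g (3 * k) = Cz (2 * g) k := by
  rcases lt_or_ge k 0 with hk | hk
  · rw [Cz_neg _ hk, mcoef, if_neg (by omega)]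
  · lift k to ℕ using hk
    rw [mcoef, if_pos (by positivity), Cz, if_pos (by positivity), Int.toNat_natCast]
    have h3 : ((3 * (k : ℤ)).toNat) = 3 * k := by omega
    rw [h3, poly_expand, Polynomial.finset_sum_coeff]
    have : ∀ j ∈ Finset.range (2 * g + 1),
        (Polynomial.C (((2*g).choose j : ℤ)) * Polynomial.X ^ (3 * j)).coeff (3 * k)
        = if j = k then (((2*g).choose j : ℤ)) else 0 := by
      intro j hj
      rw [Polynomial.coeff_C_mul, Polynomial.coeff_X_pow]
      by_cases h : j = k
      · simp [h]
      · rw [if_neg (by omega), if_neg h, mul_zero]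
    rw [Finset.sum_congr rfl this, Finset.sum_ite_eq']
    by_cases hk2 : k ∈ Finset.range (2 * g + 1)
    · rw [if_pos hk2]
    · rw [if_neg hk2, Nat.choose_eq_zero_of_lt (by simpa using hk2)]
      norm_num

lemma mcoef_not3 (g : ℕ) {r : ℤ} (h : ¬ (3 ∣ r)) : mcoef g r = 0 := by
  rcases lt_or_ge r 0 with hr | hr
  · rw [mcoef, if_neg (by omega)]
  · rw [mcoef, if_pos hr, poly_expand, Polynomial.finset_sum_coeff]
    refine Finset.sum_eq_zero fun j hj => ?_
    rw [Polynomial.coeff_C_mul, Polynomial.coeff_X_pow, if_neg (by omega), mul_zero]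

lemma mcoef_symm (g : ℕ) (s : ℤ) : mcoef g s = mcoef g (6 * g - s) := by
  by_cases h : (3 : ℤ) ∣ s
  · obtain ⟨k, rfl⟩ := h
    have h6 : (6 * (g:ℤ) - 3 * k) = 3 * (2 * g - k) := by ring
    rw [h6, mcoef_mul3, mcoef_mul3]
    rcases lt_or_ge k 0 with hk | hk
    · rw [Cz_neg _ hk, Cz, if_pos (by omega)]
      have : (2 * (g:ℤ) - k).toNat > 2 * g := by omega
      rw [Nat.choose_eq_zero_of_lt this]; norm_num
    · rcases le_or_gt k (2 * g) with hk2 | hk2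
      · rw [Cz, if_pos hk, Cz, if_pos (by omega)]
        have e : (2 * (g:ℤ) - k).toNat = 2 * g - k.toNat := by omega
        rw [e, Nat.choose_symm (show k.toNat ≤ 2 * g by omega)]
      · rw [Cz, if_pos (by omega : (0:ℤ) ≤ k),
          Cz_neg _ (by omega : 2 * (g:ℤ) - k < 0),
          Nat.choose_eq_zero_of_lt (by omega)]
        norm_num
  · rw [mcoef_not3 g h, mcoef_not3 g (by omega)]
lemma Lrec (g : ℕ) (r : ℤ) :
    Lf (g + 1) r = Lf g (r - 2) + 2 * Lf g (r - 3) + Lf g (r - 4)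
      + mcoef g r - mcoef g (r - 4) := by
  have hn2 : 2 * (g + 1) = 2 * g + 2 := by ring
  rcases (by omega : r % 3 = 0 ∨ r % 3 = 1 ∨ r % 3 = 2) with h | h | h
  · obtain ⟨k, rfl⟩ : ∃ k, r = 3 * k := ⟨r / 3, by omega⟩
    set s : ℤ := 3 * k - 2 * (g : ℤ) - 1 with hs
    have m1 : mcoef g (3 * k) = Cz (2 * g) k := mcoef_mul3 g k
    have m2 : mcoef g (3 * k - 4) = 0 := mcoef_not3 g (by omega)
    have E0 : Lf (g + 1) (3 * k) = Tz (2 * g + 2) k + Tz (2 * g + 2) s := by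
      rw [Lf, hn2, Bz3a,
        show 3 * k - 2 * ((g + 1 : ℕ) : ℤ) + 1 = s by push_cast; omega]
    have R1 : Lf g (3 * k - 2) = Tz (2 * g) (k - 2) + Tz (2 * g) s := by
      rw [Lf, show (3:ℤ) * k - 2 = 3 * (k - 1) + 1 by ring, Bz3b,
        show (k : ℤ) - 1 - 1 = k - 2 by ring,
        show 3 * ((k:ℤ) - 1) + 1 - 2 * (g : ℤ) + 1 = s by omega]
    have R2 : Lf g (3 * k - 3) = Tz (2 * g) (k - 1) + Tz (2 * g) (s - 1) := by
      rw [Lf, show (3:ℤ) * k - 3 = 3 * (k - 1) by ring, Bz3a,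
        show 3 * ((k:ℤ) - 1) - 2 * (g : ℤ) + 1 = s - 1 by omega]
    have R3 : Lf g (3 * k - 4) = Tz (2 * g) (k - 2) + Tz (2 * g) (s - 2) := by
      rw [Lf, show (3:ℤ) * k - 4 = 3 * (k - 2) + 2 by ring, Bz3c,
        show 3 * ((k:ℤ) - 2) + 2 - 2 * (g : ℤ) + 1 = s - 2 by omega]
    have S1 := Tz_shift (2 * g) k
    have S2 := Tz_shift (2 * g) s
    have P1 := Tz_step (2 * g) k
    rw [E0, R1, R2, R3, m1, m2]
    linarith
  · obtain ⟨k, rfl⟩ : ∃ k, r = 3 * k + 1 := ⟨r / 3, by omega⟩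
    set s : ℤ := 3 * k - 2 * (g : ℤ) with hs
    have m1 : mcoef g (3 * k + 1) = 0 := mcoef_not3 g (by omega)
    have m2 : mcoef g (3 * k + 1 - 4) = Cz (2 * g) (k - 1) := by
      rw [show (3:ℤ) * k + 1 - 4 = 3 * (k - 1) by ring, mcoef_mul3]
    have E0 : Lf (g + 1) (3 * k + 1) = Tz (2 * g + 2) (k - 1) + Tz (2 * g + 2) s := by
      rw [Lf, hn2, Bz3b,
        show 3 * k + 1 - 2 * ((g + 1 : ℕ) : ℤ) + 1 = s by push_cast; omega]
    have R1 : Lf g (3 * k + 1 - 2) = Tz (2 * g) (k - 1) + Tz (2 * g) s := by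
      rw [Lf, show (3:ℤ) * k + 1 - 2 = 3 * (k - 1) + 2 by ring, Bz3c,
        show 3 * ((k:ℤ) - 1) + 2 - 2 * (g : ℤ) + 1 = s by omega]
    have R2 : Lf g (3 * k + 1 - 3) = Tz (2 * g) (k - 2) + Tz (2 * g) (s - 1) := by
      rw [Lf, show (3:ℤ) * k + 1 - 3 = 3 * (k - 1) + 1 by ring, Bz3b,
        show (k : ℤ) - 1 - 1 = k - 2 by ring,
        show 3 * ((k:ℤ) - 1) + 1 - 2 * (g : ℤ) + 1 = s - 1 by omega]
    have R3 : Lf g (3 * k + 1 - 4) = Tz (2 * g) (k - 1) + Tz (2 * g) (s - 2) := by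
      rw [Lf, show (3:ℤ) * k + 1 - 4 = 3 * (k - 1) by ring, Bz3a,
        show 3 * ((k:ℤ) - 1) - 2 * (g : ℤ) + 1 = s - 2 by omega]
    have S1 := Tz_shift (2 * g) (k - 1)
    have S2 := Tz_shift (2 * g) s
    have P1 := Tz_step (2 * g) (k - 1)
    rw [show (k:ℤ) - 1 - 1 = k - 2 by ring] at S1
    rw [show (k:ℤ) - 1 - 2 = k - 3 by ring] at S1 P1
    rw [E0, R1, R2, R3, m1, m2]
    linarith
  · obtain ⟨k, rfl⟩ : ∃ k, r = 3 * k + 2 := ⟨r / 3, by omega⟩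
    set s : ℤ := 3 * k - 2 * (g : ℤ) + 1 with hs
    have m1 : mcoef g (3 * k + 2) = 0 := mcoef_not3 g (by omega)
    have m2 : mcoef g (3 * k + 2 - 4) = 0 := mcoef_not3 g (by omega)
    have E0 : Lf (g + 1) (3 * k + 2) = Tz (2 * g + 2) k + Tz (2 * g + 2) s := by
      rw [Lf, hn2, Bz3c,
        show 3 * k + 2 - 2 * ((g + 1 : ℕ) : ℤ) + 1 = s by push_cast; omega]
    have R1 : Lf g (3 * k + 2 - 2) = Tz (2 * g) k + Tz (2 * g) s := by
      rw [Lf, show (3:ℤ) * k + 2 - 2 = 3 * k by ring, Bz3a,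
        show 3 * (k:ℤ) - 2 * (g : ℤ) + 1 = s by omega]
    have R2 : Lf g (3 * k + 2 - 3) = Tz (2 * g) (k - 1) + Tz (2 * g) (s - 1) := by
      rw [Lf, show (3:ℤ) * k + 2 - 3 = 3 * (k - 1) + 2 by ring, Bz3c,
        show 3 * ((k:ℤ) - 1) + 2 - 2 * (g : ℤ) + 1 = s - 1 by omega]
    have R3 : Lf g (3 * k + 2 - 4) = Tz (2 * g) (k - 2) + Tz (2 * g) (s - 2) := by
      rw [Lf, show (3:ℤ) * k + 2 - 4 = 3 * (k - 1) + 1 by ring, Bz3b,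
        show (k : ℤ) - 1 - 1 = k - 2 by ring,
        show 3 * ((k:ℤ) - 1) + 1 - 2 * (g : ℤ) + 1 = s - 2 by omega]
    have S1 := Tz_shift (2 * g) k
    have S2 := Tz_shift (2 * g) s
    rw [E0, R1, R2, R3, m1, m2]
    linarith

lemma Lblock (g : ℕ) :
    Lf (g + 1) (3 * g) = 4 * Lf g (3 * g - 3) + mcoef g (3 * g) - mcoef g (3 * g - 3)
    ∧ Lf (g + 1) (3 * g + 1) = Lf (g + 1) (3 * g) := by
  have hn2 : 2 * (g + 1) = 2 * g + 2 := by ring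
  have E0 : Lf (g + 1) (3 * (g:ℤ)) = Tz (2 * g + 2) (g:ℤ) + Tz (2 * g + 2) ((g:ℤ) - 1) := by
    rw [Lf, hn2, Bz3a,
      show 3 * (g:ℤ) - 2 * ((g + 1 : ℕ) : ℤ) + 1 = (g:ℤ) - 1 by push_cast; ring]
  have E1 : Lf (g + 1) (3 * (g:ℤ) + 1) = Tz (2 * g + 2) ((g:ℤ) - 1) + Tz (2 * g + 2) (g:ℤ) := by
    rw [Lf, hn2, Bz3b,
      show 3 * (g:ℤ) + 1 - 2 * ((g + 1 : ℕ) : ℤ) + 1 = (g:ℤ) by push_cast; ring]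
  have R0 : Lf g (3 * (g:ℤ) - 3) = Tz (2 * g) ((g:ℤ) - 1) + Tz (2 * g) ((g:ℤ) - 2) := by
    rw [Lf, show (3:ℤ) * (g:ℤ) - 3 = 3 * ((g:ℤ) - 1) by ring, Bz3a,
      show 3 * ((g:ℤ) - 1) - 2 * (g : ℤ) + 1 = (g:ℤ) - 2 by ring]
  have m1 : mcoef g (3 * (g:ℤ)) = Cz (2 * g) (g:ℤ) := mcoef_mul3 g (g:ℤ)
  have m2 : mcoef g (3 * (g:ℤ) - 3) = Cz (2 * g) ((g:ℤ) - 1) := by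
    rw [show (3:ℤ) * (g:ℤ) - 3 = 3 * ((g:ℤ) - 1) by ring, mcoef_mul3]
  have S1 := Tz_shift (2 * g) (g:ℤ)
  have S2 := Tz_shift (2 * g) ((g:ℤ) - 1)
  have P1 := Tz_step (2 * g) (g:ℤ)
  have P2 := Tz_step (2 * g) ((g:ℤ) - 1)
  rw [show ((g:ℤ)) - 1 - 1 = (g:ℤ) - 2 by ring] at S2
  rw [show ((g:ℤ)) - 1 - 2 = (g:ℤ) - 3 by ring] at S2 P2
  constructor
  · rw [E0, R0, m1, m2]; linarith
  · rw [E0, E1]; ring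
lemma Cz_natCast (n m : ℕ) : Cz n (m : ℤ) = (n.choose m : ℤ) := by
  simp [Cz]

lemma TT (n m : ℕ) :
    Tz n (m : ℤ) + Tz n ((m : ℤ) + 1) = ∑ j ∈ Finset.range (m + 2), ((n.choose j : ℕ) : ℤ) := by
  induction m with
  | zero => norm_num [Tz, Tn, Finset.sum_range_succ, Nat.choose_one_right]
  | succ m ih =>
    have st := Tz_step n ((m:ℤ) + 1 + 1)
    rw [show (m:ℤ) + 1 + 1 - 2 = (m:ℤ) by ring] at st
    have hc : Cz n ((m:ℤ) + 1 + 1) = ((n.choose (m+2) : ℕ) : ℤ) := by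
      rw [show (m:ℤ) + 1 + 1 = ((m + 2 : ℕ) : ℤ) by push_cast; ring, Cz_natCast]
    rw [hc] at st
    have e1 : ((m + 1 : ℕ) : ℤ) = (m:ℤ) + 1 := by push_cast; ring
    rw [e1, Finset.sum_range_succ]
    linarith

lemma claimS (n m : ℕ) :
    2 * ∑ k ∈ Finset.range m, Tz n (k : ℤ) + Tz n (m : ℤ)
      = ∑ j ∈ Finset.range (m + 1), (((m : ℤ) + 1 - j) * ((n.choose j : ℕ) : ℤ)) := by
  induction m with
  | zero => norm_num [Tz, Tn]
  | succ m ih =>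
    have e1 : ((m + 1 : ℕ) : ℤ) = (m:ℤ) + 1 := by push_cast; ring
    rw [e1, Finset.sum_range_succ]
    have split : ∑ j ∈ Finset.range (m + 1 + 1), (((m:ℤ) + 1 + 1 - j) * ((n.choose j : ℕ) : ℤ))
        = ∑ j ∈ Finset.range (m + 1 + 1), ((((m:ℤ) + 1 - j) * ((n.choose j : ℕ) : ℤ))
            + ((n.choose j : ℕ) : ℤ)) := by
      refine Finset.sum_congr rfl fun j hj => ?_
      ring
    rw [split, Finset.sum_add_distrib, Finset.sum_range_succ
        (fun j => ((m:ℤ) + 1 - j) * ((n.choose j : ℕ) : ℤ))]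
    have last0 : ((m:ℤ) + 1 - ((m + 1 : ℕ) : ℤ)) * ((n.choose (m+1) : ℕ) : ℤ) = 0 := by
      rw [e1]; ring
    have tt := TT n m
    rw [last0]
    linarith

lemma sum_shift (n a : ℕ) : ∀ b : ℕ,
    ∑ r ∈ Finset.range (a + b), Tz n ((r:ℤ) - a) = ∑ j ∈ Finset.range b, Tz n (j:ℤ) := by
  intro b
  induction b with
  | zero =>
    simp only [Nat.add_zero, Finset.range_zero, Finset.sum_empty]
    refine Finset.sum_eq_zero fun r hr => ?_
    have : (r:ℤ) - a < 0 := by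
      have := Finset.mem_range.mp hr; omega
    exact Tz_neg n this
  | succ b ih =>
    rw [show a + (b + 1) = (a + b) + 1 by ring, Finset.sum_range_succ, Finset.sum_range_succ, ih,
      show ((a + b : ℕ) : ℤ) - a = (b : ℤ) by push_cast; ring]

lemma sumB (n : ℕ) : ∀ m : ℕ,
    ∑ r ∈ Finset.range (3 * m + 2), Bz n (r : ℤ)
      = ∑ k ∈ Finset.range m, (2 * Tz n (k:ℤ) + Tz n ((k:ℤ) - 1))
        + Tz n (m:ℤ) + Tz n ((m:ℤ) - 1) := by
  intro m
  induction m with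
  | zero =>
    rw [show 3 * 0 + 2 = 2 by norm_num]
    rw [Finset.sum_range_succ, Finset.sum_range_one]
    have b0 : Bz n ((0:ℕ):ℤ) = Tz n 0 := by
      rw [show ((0:ℕ):ℤ) = 3 * (0:ℤ) by norm_num, Bz3a]
    have b1 : Bz n ((1:ℕ):ℤ) = Tz n (0 - 1) := by
      rw [show ((1:ℕ):ℤ) = 3 * (0:ℤ) + 1 by norm_num, Bz3b]
    rw [b0, b1]
    norm_num [Tz]
  | succ m ih =>
    rw [show 3 * (m + 1) + 2 = (3 * m + 2) + 1 + 1 + 1 by ring,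
      Finset.sum_range_succ, Finset.sum_range_succ, Finset.sum_range_succ, ih,
      Finset.sum_range_succ (fun k => 2 * Tz n (k:ℤ) + Tz n ((k:ℤ) - 1))]
    have b2 : Bz n ((3 * m + 2 : ℕ) : ℤ) = Tz n (m:ℤ) := by
      rw [show ((3 * m + 2 : ℕ) : ℤ) = 3 * (m:ℤ) + 2 by push_cast; ring, Bz3c]
    have b3 : Bz n ((3 * m + 2 + 1 : ℕ) : ℤ) = Tz n ((m:ℤ) + 1) := by
      rw [show ((3 * m + 2 + 1 : ℕ) : ℤ) = 3 * ((m:ℤ) + 1) by push_cast; ring, Bz3a]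
    have b4 : Bz n ((3 * m + 2 + 1 + 1 : ℕ) : ℤ) = Tz n (m:ℤ) := by
      rw [show ((3 * m + 2 + 1 + 1 : ℕ) : ℤ) = 3 * ((m:ℤ) + 1) + 1 by push_cast; ring, Bz3b,
        show (m:ℤ) + 1 - 1 = (m:ℤ) by ring]
    rw [b2, b3, b4, show ((m + 1 : ℕ) : ℤ) = (m:ℤ) + 1 by push_cast; ring,
      show (m:ℤ) + 1 - 1 = (m:ℤ) by ring]
    ring

lemma binom_half (g : ℕ) :
    2 * ∑ j ∈ Finset.range g, (((g:ℤ) - j) * (((2 * g).choose j : ℕ) : ℤ))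
      = g * (((2 * g).choose g : ℕ) : ℤ) := by
  set c : ℕ → ℤ := fun j => (((2 * g).choose j : ℕ) : ℤ) with hc
  have key : ∀ j ∈ Finset.range g, ((g:ℤ) - j) * c j = ((j:ℤ) + 1) * c (j + 1) - g * c j := by
    intro j hj
    have hj' : j < g := Finset.mem_range.mp hj
    have h := Nat.choose_succ_right_eq (2 * g) j
    have hle : j ≤ 2 * g := by omega
    zify [hle] at h
    simp only [hc]
    nlinarith [h]
  have h1 : ∑ j ∈ Finset.range g, (((g:ℤ) - j) * c j)
      = ∑ j ∈ Finset.range g, (((j:ℤ) + 1) * c (j + 1))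
        - ∑ j ∈ Finset.range g, ((g:ℤ) * c j) := by
    rw [← Finset.sum_sub_distrib]
    exact Finset.sum_congr rfl key
  have A : ∑ j ∈ Finset.range g, ((j:ℤ) + 1) * c (j + 1)
      = ∑ i ∈ Finset.range g, (i:ℤ) * c i + (g:ℤ) * c g := by
    have h1 := Finset.sum_range_succ' (fun i => (i:ℤ) * c i) g
    have h2 := Finset.sum_range_succ (fun i => (i:ℤ) * c i) g
    have e : ∀ k, ((k + 1 : ℕ) : ℤ) * c (k + 1) = ((k:ℤ) + 1) * c (k + 1) := by
      intro k; push_cast; ring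
    rw [Finset.sum_congr rfl (fun k _ => e k)] at h1
    simp only [Nat.cast_zero, zero_mul, add_zero] at h1
    linarith
  have B : ∑ j ∈ Finset.range g, (g:ℤ) * c j
      = ∑ j ∈ Finset.range g, ((g:ℤ) - j) * c j + ∑ j ∈ Finset.range g, (j:ℤ) * c j := by
    rw [← Finset.sum_add_distrib]
    refine Finset.sum_congr rfl fun j hj => ?_
    ring
  simp only [hc] at h1 A B ⊢
  linarith
lemma Hc_out (g : ℕ) (hg : 1 ≤ g) {r : ℤ} (h : r < 0 ∨ 6 * (g:ℤ) - 3 < r) : Hc g r = 0 := by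
  rw [Hc]
  refine Lf_neg g hg ?_
  rcases h with h | h
  · exact lt_of_le_of_lt (min_le_left _ _) h
  · refine lt_of_le_of_lt (min_le_right _ _) ?_; omega

lemma Hc_refl (g : ℕ) (r : ℤ) : Hc g (6 * (g:ℤ) - 3 - r) = Hc g r := by
  rw [Hc, Hc, show 6 * (g:ℤ) - 3 - (6 * (g:ℤ) - 3 - r) = r by ring, min_comm]

lemma sum_range_split (f : ℕ → ℤ) (a : ℕ) : ∀ b : ℕ,
    ∑ r ∈ Finset.range (a + b), f r
      = ∑ r ∈ Finset.range a, f r + ∑ i ∈ Finset.range b, f (a + i) := by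
  intro b
  induction b with
  | zero => simp
  | succ b ih =>
    rw [show a + (b + 1) = (a + b) + 1 by ring, Finset.sum_range_succ, ih,
      Finset.sum_range_succ]
    ring
theorem h_total_sum
    (h : ℕ → ℤ → ℤ)
    (h1 : ∀ r : ℤ, 0 ≤ r → r ≤ 3 → h 1 r = 1)
    (h0 : ∀ g : ℕ, 1 ≤ g → ∀ r : ℤ, (r < 0 ∨ 6 * (g : ℤ) - 3 < r) → h g r = 0)
    (hrec1 : ∀ g : ℕ, 1 ≤ g → ∀ r : ℤ, 0 ≤ r → r ≤ 3 * (g : ℤ) - 1 →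
      h (g + 1) r = h g (r - 2) + 2 * h g (r - 3) + h g (r - 4) + mcoef g r - mcoef g (r - 4))
    (hrec2 : ∀ g : ℕ, 1 ≤ g → ∀ r : ℤ, 3 * (g : ℤ) ≤ r → r ≤ 3 * (g : ℤ) + 3 →
      h (g + 1) r = 4 * h g (3 * (g : ℤ)) + mcoef g (3 * (g : ℤ)) - mcoef g (3 * (g : ℤ) - 3))
    (hrec3 : ∀ g : ℕ, 1 ≤ g → ∀ r : ℤ, 3 * (g : ℤ) + 4 ≤ r → r ≤ 6 * (g : ℤ) + 3 →
      h (g + 1) r = h g (r - 2) + 2 * h g (r - 3) + h g (r - 4) + mcoef g (r - 3) - mcoef g (r + 1)) :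
    ∀ g : ℕ, 1 ≤ g →
      ∑ r ∈ Finset.range (6 * g - 2), h g (r : ℤ) =
        2 * g * Nat.choose (2 * g) g := by
  -- Step 1: pointwise identification of `h g` with the closed form `Hc g`.
  have key : ∀ g : ℕ, 1 ≤ g → ∀ r : ℤ, h g r = Hc g r := by
    intro g hg
    induction g, hg using Nat.le_induction with
    | base =>
      intro r
      rcases (by omega : (r < 0 ∨ 6 * ((1:ℕ):ℤ) - 3 < r) ∨ (0 ≤ r ∧ r ≤ 3)) with hr | hr
      · rw [h0 1 le_rfl r hr, Hc_out 1 le_rfl hr]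
      · rw [h1 r hr.1 hr.2]
        obtain ⟨hr0, hr3⟩ := hr
        interval_cases r <;> norm_num [Hc, Lf, Bz, Tz, Tn]
    | succ g hg ih =>
      intro r
      have hg' : (1:ℤ) ≤ (g:ℤ) := by exact_mod_cast hg
      rcases (by omega : r < 0 ∨ (0 ≤ r ∧ r ≤ 3*(g:ℤ) - 1) ∨ (3*(g:ℤ) ≤ r ∧ r ≤ 3*(g:ℤ)+3)
          ∨ (3*(g:ℤ)+4 ≤ r ∧ r ≤ 6*(g:ℤ)+3) ∨ 6*(g:ℤ)+3 < r) with hr | hr | hr | hr | hr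
      · rw [h0 (g+1) (by omega) r (Or.inl hr), Hc_out (g+1) (by omega) (Or.inl hr)]
      · -- region 1
        rw [hrec1 g hg r hr.1 hr.2, ih (r-2), ih (r-3), ih (r-4)]
        have e0 : Hc (g+1) r = Lf (g+1) r := by
          rw [Hc, min_eq_left (by push_cast; omega)]
        have e1 : Hc g (r-2) = Lf g (r-2) := by
          rw [Hc, min_eq_left (by omega)]
        have e2 : Hc g (r-3) = Lf g (r-3) := by
          rw [Hc, min_eq_left (by omega)]
        have e3 : Hc g (r-4) = Lf g (r-4) := by
          rw [Hc, min_eq_left (by omega)]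
        rw [e0, e1, e2, e3]
        exact (Lrec g r).symm
      · -- region 2 (central block)
        rw [hrec2 g hg r hr.1 hr.2, ih (3*(g:ℤ))]
        have em : Hc g (3*(g:ℤ)) = Lf g (3*(g:ℤ) - 3) := by
          rw [Hc, min_eq_right (by omega), show 6*(g:ℤ)-3-3*(g:ℤ) = 3*(g:ℤ)-3 by ring]
        obtain ⟨Lb1, Lb2⟩ := Lblock g
        have hfin : Hc (g+1) r = 4 * Lf g (3*(g:ℤ)-3) + mcoef g (3*(g:ℤ)) - mcoef g (3*(g:ℤ)-3) := by
          rcases (by omega : r = 3*(g:ℤ) ∨ r = 3*(g:ℤ)+1 ∨ r = 3*(g:ℤ)+2 ∨ r = 3*(g:ℤ)+3)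
            with rfl | rfl | rfl | rfl
          · rw [Hc, min_eq_left (by push_cast; omega)]; exact Lb1
          · rw [Hc, min_eq_left (by push_cast; omega)]; rw [Lb2]; exact Lb1
          · rw [Hc, min_eq_right (by push_cast; omega),
              show 6*((g+1:ℕ):ℤ)-3-(3*(g:ℤ)+2) = 3*(g:ℤ)+1 by push_cast; ring]
            rw [Lb2]; exact Lb1
          · rw [Hc, min_eq_right (by push_cast; omega),
              show 6*((g+1:ℕ):ℤ)-3-(3*(g:ℤ)+3) = 3*(g:ℤ) by push_cast; ring]
            exact Lb1
        rw [em, hfin]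
      · -- region 3
        rw [hrec3 g hg r hr.1 hr.2, ih (r-2), ih (r-3), ih (r-4)]
        have e0 : Hc (g+1) r = Lf (g+1) (6*(g:ℤ)+3-r) := by
          rw [Hc, min_eq_right (by push_cast; omega),
            show 6*((g+1:ℕ):ℤ)-3-r = 6*(g:ℤ)+3-r by push_cast; ring]
        have e1 : Hc g (r-2) = Lf g (6*(g:ℤ)+3-r-4) := by
          rw [Hc, min_eq_right (by omega), show 6*(g:ℤ)-3-(r-2) = 6*(g:ℤ)+3-r-4 by ring]
        have e2 : Hc g (r-3) = Lf g (6*(g:ℤ)+3-r-3) := by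
          rw [Hc, min_eq_right (by omega), show 6*(g:ℤ)-3-(r-3) = 6*(g:ℤ)+3-r-3 by ring]
        have e3 : Hc g (r-4) = Lf g (6*(g:ℤ)+3-r-2) := by
          rw [Hc, min_eq_right (by omega), show 6*(g:ℤ)-3-(r-4) = 6*(g:ℤ)+3-r-2 by ring]
        have m3 : mcoef g (r-3) = mcoef g (6*(g:ℤ)+3-r) := by
          rw [mcoef_symm g (r-3), show 6*(g:ℤ)-(r-3) = 6*(g:ℤ)+3-r by ring]
        have m4 : mcoef g (r+1) = mcoef g (6*(g:ℤ)+3-r-4) := by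
          rw [mcoef_symm g (r+1), show 6*(g:ℤ)-(r+1) = 6*(g:ℤ)+3-r-4 by ring]
        have main := Lrec g (6*(g:ℤ)+3-r)
        rw [e0, e1, e2, e3, m3, m4]
        linarith [main]
      · rw [h0 (g+1) (by omega) r (Or.inr (by push_cast; omega)),
          Hc_out (g+1) (by omega) (Or.inr (by push_cast; omega))]
  -- Step 2: compute the total sum of the closed form.
  intro g hg
  obtain ⟨G, rfl⟩ : ∃ G, g = G + 1 := ⟨g - 1, by omega⟩
  rw [Finset.sum_congr rfl (fun r _ => key (G+1) (by omega) ((r:ℕ):ℤ))]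
  rw [show 6 * (G+1) - 2 = (3*G+2) + (3*G+2) by omega, sum_range_split]
  have refl2 : ∑ i ∈ Finset.range (3*G+2), Hc (G+1) ((3*G+2+i : ℕ) : ℤ)
      = ∑ j ∈ Finset.range (3*G+2), Hc (G+1) ((j:ℕ):ℤ) := by
    rw [← Finset.sum_range_reflect (fun i => Hc (G+1) ((3*G+2+i : ℕ) : ℤ)) (3*G+2)]
    refine Finset.sum_congr rfl fun j hj => ?_
    have hj' : j < 3*G+2 := Finset.mem_range.mp hj
    have e : ((3*G+2+(3*G+2-1-j) : ℕ) : ℤ) = 6*((G+1:ℕ):ℤ) - 3 - (j:ℤ) := by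
      push_cast [show (3*G+2-1-j) = 3*G+1-j by omega]
      omega
    rw [e, Hc_refl]
  rw [refl2]
  have half : ∀ r : ℕ, r < 3*G+2 → Hc (G+1) ((r:ℕ):ℤ) = Lf (G+1) (r:ℤ) := by
    intro r hr
    rw [Hc, min_eq_left (by push_cast; omega)]
  rw [Finset.sum_congr rfl (fun r hr => half r (Finset.mem_range.mp hr))]
  simp only [Lf]
  rw [Finset.sum_add_distrib]
  have hB := sumB (2*(G+1)) G
  have hT : ∑ r ∈ Finset.range (3*G+2), Tz (2*(G+1)) ((r:ℤ) - 2*((G+1:ℕ):ℤ) + 1)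
      = ∑ j ∈ Finset.range (G+1), Tz (2*(G+1)) (j:ℤ) := by
    rw [show 3*G+2 = (2*G+1) + (G+1) by ring] at *
    rw [Finset.sum_congr rfl (fun r _ => by
      rw [show (r:ℤ) - 2*((G+1:ℕ):ℤ) + 1 = (r:ℤ) - ((2*G+1 : ℕ):ℤ) by push_cast; ring])]
    exact sum_shift (2*(G+1)) (2*G+1) (G+1)
  rw [hB, hT]
  -- regroup the T-sums
  have reg1 : ∑ k ∈ Finset.range G, (2 * Tz (2*(G+1)) (k:ℤ) + Tz (2*(G+1)) ((k:ℤ) - 1))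
      = 2 * ∑ k ∈ Finset.range G, Tz (2*(G+1)) (k:ℤ)
        + ∑ k ∈ Finset.range G, Tz (2*(G+1)) ((k:ℤ) - 1) := by
    rw [Finset.sum_add_distrib, Finset.mul_sum]
  have reg2 : ∑ k ∈ Finset.range G, Tz (2*(G+1)) ((k:ℤ) - 1) + Tz (2*(G+1)) ((G:ℤ) - 1)
      = ∑ k ∈ Finset.range G, Tz (2*(G+1)) (k:ℤ) := by
    have h1 := Finset.sum_range_succ' (fun k => Tz (2*(G+1)) ((k:ℤ) - 1)) G
    have h2 := Finset.sum_range_succ (fun k => Tz (2*(G+1)) ((k:ℤ) - 1)) G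
    have e : ∀ k : ℕ, Tz (2*(G+1)) (((k+1 : ℕ):ℤ) - 1) = Tz (2*(G+1)) (k:ℤ) := by
      intro k
      rw [show ((k+1:ℕ):ℤ) - 1 = (k:ℤ) by push_cast; ring]
    rw [Finset.sum_congr rfl (fun k _ => e k)] at h1
    have e0 : Tz (2*(G+1)) (((0:ℕ):ℤ) - 1) = 0 := Tz_neg _ (by norm_num)
    rw [e0] at h1
    linarith
  have reg3 : ∑ j ∈ Finset.range (G+1), Tz (2*(G+1)) (j:ℤ)
      = ∑ k ∈ Finset.range G, Tz (2*(G+1)) (k:ℤ) + Tz (2*(G+1)) (G:ℤ) :=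
    Finset.sum_range_succ _ G
  -- the binomial identities
  have hcl := claimS (2*(G+1)) G
  have hbh := binom_half (G+1)
  have ecast : ∀ j : ℕ, (((G+1:ℕ):ℤ) - (j:ℤ)) = ((G:ℤ) + 1 - (j:ℤ)) := by
    intro j; push_cast; ring
  rw [Finset.sum_congr rfl (fun j _ => by rw [ecast j])] at hbh
  push_cast
  push_cast at hB hT reg1 reg2 reg3 hcl hbh
  linarith
end

section
/- Let h_r^g be defined by the mod-2 recursion (h_r^1 = 1 for r=0,1,2,3, and the three-case recursion as in the paper), and let b_r^g be defined by Newstead's rational recursion (b_0^1 = b_3^1 = 1, b_1^1 = b_2^1 = 0, b_r^{g+1} = b_{r-2}^g + 2b_{r-3}^g + b_{r-4}^g + m_r^g − m_{r-4}^g for r ≤ 3g+1, extended by the symmetry b_r^{g+1} = b_{6g+3-r}^{g+1}). Then for every g ≥ 2: h_r^g = b_r^g for all 0 ≤ r ≤ 2g−2, and h_{2g-1}^g = b_{2g-1}^g + 1. -/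
lemma mcoef_neg (g : ℕ) (r : ℤ) (hr : r < 0) : mcoef g r = 0 := by
  simp [mcoef, not_le.mpr hr]

lemma sq_expand : (1 + Polynomial.X ^ 3 : Polynomial ℤ) ^ (2 * 1)
    = Polynomial.C 1 + Polynomial.C 2 * Polynomial.X ^ 3 + Polynomial.C 1 * Polynomial.X ^ 6 := by
  simp only [map_one, map_ofNat]; ring

lemma mcoef_1_0 : mcoef 1 0 = 1 := by
  simp only [mcoef, le_refl, if_true, Int.toNat_zero, sq_expand]
  simp [Polynomial.coeff_add, Polynomial.coeff_C_mul, Polynomial.coeff_X_pow,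
    Polynomial.coeff_one]

lemma mcoef_1_3 : mcoef 1 3 = 2 := by
  have h3 : (3 : ℤ).toNat = 3 := rfl
  simp only [mcoef, show (0:ℤ) ≤ 3 by norm_num, if_true, h3, sq_expand]
  simp [Polynomial.coeff_add, Polynomial.coeff_C_mul, Polynomial.coeff_X_pow,
    Polynomial.coeff_one]

theorem h_eq_b_low_degrees
    (h b : ℕ → ℤ → ℤ)
    (h1 : ∀ r : ℤ, 0 ≤ r → r ≤ 3 → h 1 r = 1)
    (h0 : ∀ g : ℕ, 1 ≤ g → ∀ r : ℤ, (r < 0 ∨ 6 * (g : ℤ) - 3 < r) → h g r = 0)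
    (hrec1 : ∀ g : ℕ, 1 ≤ g → ∀ r : ℤ, 0 ≤ r → r ≤ 3 * (g : ℤ) - 1 →
      h (g + 1) r = h g (r - 2) + 2 * h g (r - 3) + h g (r - 4) + mcoef g r - mcoef g (r - 4))
    (hrec2 : ∀ g : ℕ, 1 ≤ g → ∀ r : ℤ, 3 * (g : ℤ) ≤ r → r ≤ 3 * (g : ℤ) + 3 →
      h (g + 1) r = 4 * h g (3 * (g : ℤ)) + mcoef g (3 * (g : ℤ)) - mcoef g (3 * (g : ℤ) - 3))
    (hrec3 : ∀ g : ℕ, 1 ≤ g → ∀ r : ℤ, 3 * (g : ℤ) + 4 ≤ r → r ≤ 6 * (g : ℤ) + 3 →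
      h (g + 1) r = h g (r - 2) + 2 * h g (r - 3) + h g (r - 4) + mcoef g (r - 3) - mcoef g (r + 1))
    (b1 : b 1 0 = 1 ∧ b 1 3 = 1 ∧ b 1 1 = 0 ∧ b 1 2 = 0)
    (b0 : ∀ g : ℕ, 1 ≤ g → ∀ r : ℤ, (r < 0 ∨ 6 * (g : ℤ) - 3 < r) → b g r = 0)
    (brec : ∀ g : ℕ, 1 ≤ g → ∀ r : ℤ, 0 ≤ r → r ≤ 3 * (g : ℤ) + 1 →
      b (g + 1) r = b g (r - 2) + 2 * b g (r - 3) + b g (r - 4) + mcoef g r - mcoef g (r - 4))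
    (bsym : ∀ g : ℕ, 1 ≤ g → ∀ r : ℤ, 3 * (g : ℤ) + 2 ≤ r → r ≤ 6 * (g : ℤ) + 3 →
      b (g + 1) r = b (g + 1) (6 * (g : ℤ) + 3 - r)) :
    ∀ g : ℕ, 2 ≤ g →
      (∀ r : ℤ, 0 ≤ r → r ≤ 2 * (g : ℤ) - 2 → h g r = b g r) ∧
      h g (2 * (g : ℤ) - 1) = b g (2 * (g : ℤ) - 1) + 1 := by
  obtain ⟨b10, b13, b11, b12⟩ := b1
  have key : ∀ g : ℕ, 1 ≤ g →
      (∀ r : ℤ, 0 ≤ r → r ≤ 2 * (g : ℤ) - 2 → h g r = b g r) ∧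
      h g (2 * (g : ℤ) - 1) = b g (2 * (g : ℤ) - 1) + 1 := by
    intro g hg
    induction g, hg using Nat.le_induction with
    | base =>
      constructor
      · intro r hr0 hr2
        norm_num at hr2
        have : r = 0 := le_antisymm hr2 hr0
        rw [this, h1 0 le_rfl (by norm_num), b10]
      · norm_num
        rw [h1 1 (by norm_num) (by norm_num), b11]; norm_num
    | succ g hg ih =>
      obtain ⟨ih1, ih2⟩ := ih
      have hgZ : (1 : ℤ) ≤ (g : ℤ) := by exact_mod_cast hg
      -- equality for all r ≤ 2g-2 (including negative r)
      have heqb : ∀ r : ℤ, r ≤ 2 * (g : ℤ) - 2 → h g r = b g r := by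
        intro r hr
        rcases lt_or_ge r 0 with hneg | hpos
        · rw [h0 g hg r (Or.inl hneg), b0 g hg r (Or.inl hneg)]
        · exact ih1 r hpos hr
      constructor
      · intro r hr0 hr2
        push_cast at hr2
        have hr2' : r ≤ 2 * (g : ℤ) := by linarith
        have hr3 : r ≤ 3 * (g : ℤ) - 1 := by linarith
        rw [hrec1 g hg r hr0 hr3, brec g hg r hr0 (by linarith)]
        rw [heqb (r - 2) (by linarith), heqb (r - 3) (by linarith),
          heqb (r - 4) (by linarith)]
      · push_cast
        have harg : 2 * ((g : ℤ) + 1) - 1 = 2 * (g : ℤ) + 1 := by ring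
        rw [harg]
        rcases eq_or_lt_of_le hg with hg1 | hg2
        · -- g = 1
          subst hg1
          norm_num
          have hh : h 2 3 = 4 * h 1 3 + mcoef 1 3 - mcoef 1 0 := by
            have := hrec2 1 le_rfl 3 (by norm_num) (by norm_num)
            simpa using this
          have hb : b 2 3 = b 1 1 + 2 * b 1 0 + b 1 (-1) + mcoef 1 3 - mcoef 1 (-1) := by
            have := brec 1 le_rfl 3 (by norm_num) (by norm_num)
            norm_num at this
            convert this using 3 <;> norm_num
          have hbneg : b 1 (-1) = 0 := b0 1 le_rfl (-1) (Or.inl (by norm_num))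
          have hmneg : mcoef 1 (-1) = 0 := mcoef_neg 1 (-1) (by norm_num)
          rw [hh, hb, h1 3 (by norm_num) le_rfl, b11, b10, hbneg, hmneg,
            mcoef_1_3, mcoef_1_0]
          ring
        · -- g ≥ 2
          have hgZ2 : (2 : ℤ) ≤ (g : ℤ) := by exact_mod_cast hg2
          have hr0 : (0 : ℤ) ≤ 2 * (g : ℤ) + 1 := by linarith
          have hr3 : 2 * (g : ℤ) + 1 ≤ 3 * (g : ℤ) - 1 := by linarith
          rw [hrec1 g hg _ hr0 hr3, brec g hg _ hr0 (by linarith)]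
          have e1 : 2 * (g : ℤ) + 1 - 2 = 2 * (g : ℤ) - 1 := by ring
          have e2 : 2 * (g : ℤ) + 1 - 3 = 2 * (g : ℤ) - 2 := by ring
          have e3 : 2 * (g : ℤ) + 1 - 4 = 2 * (g : ℤ) - 3 := by ring
          rw [e1, e2, e3, ih2, heqb (2 * (g : ℤ) - 2) le_rfl,
            heqb (2 * (g : ℤ) - 3) (by linarith)]
          ring
  intro g hg
  exact key g (by omega)
end
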